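/- Let u : ℝ → ℝ be four times differentiable on an open interval J ⊆ (0,∞) with u(x) ≠ 0 and u(x)·u''(x) − 2·u'(x)² ≠ 0 for all x ∈ J, and suppose u satisfies u⁗(x) = (−24·u'(x)·u''(x)·u'''(x) + 18·u''(x)³ + 4·u(x)·u'''(x)²)/(3·(u(x)·u''(x) − 2·u'(x)²)) for all x ∈ J. Define v(t) := t/u(1/t). Then for every t > 0 with 1/t ∈ J one has v''(t) ≠ 0 and v⁗(t) = (4/3)·v'''(t)²/v''(t). -/

import Mathlib

/-!
Writing `r = 1/u`, the transformed function is `v(t) = t · r(1/t)`, so the point transformation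
factors as `u ↦ 1/u` followed by the projective map `y ↦ (t ↦ t · y(1/t))`.

A direct computation gives `r'' = -(u u'' - 2u'²)/u³`, and the given fourth-order equation for `u`
is exactly the canonical equation `r⁗ = (4/3) r'''²/r''` for `r`.

The canonical equation is invariant under the projective map: with `x = 1/t` and `v(t) = t · y(x)`,
`v'' = x³ y''`, `v''' = -x⁴ (3y'' + x y''')`, `v⁗ = x⁵ (12y'' + 8x y''' + x² y⁗)`, hence
`v⁗ v'' - (4/3) v'''² = x⁸ (y⁗ y'' - (4/3) y'''²)`.
-/

open Set Function

section Deriv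

variable {𝕜 F : Type*} [NontriviallyNormedField 𝕜] [NormedAddCommGroup F] [NormedSpace 𝕜 F]
  {f g : 𝕜 → F} {S : Set 𝕜} {k : ℕ} {x : 𝕜}

theorem eqOn_iterate_deriv_succ (h : ∀ x ∈ S, HasDerivAt (deriv^[k] f) (g x) x) :
    EqOn (deriv^[k + 1] f) g S := fun x hx => by
  rw [iterate_succ_apply']
  exact (h x hx).deriv

theorem hasDerivAt_iterate_deriv_of_eqOn {g' : F} (hg : HasDerivAt g g' x) (hS : IsOpen S)
    (hx : x ∈ S) (hfg : EqOn (deriv^[k] f) g S) : HasDerivAt (deriv^[k] f) g' x :=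
  hg.congr_of_eventuallyEq (hfg.eventuallyEq_of_mem (hS.mem_nhds hx))

theorem hasDerivAt_one_div (hx : x ≠ 0) : HasDerivAt (fun x : 𝕜 => 1 / x) (-(x ^ 2)⁻¹) x := by
  simpa only [one_div] using hasDerivAt_inv hx

end Deriv

def SatisfiesCanonicalODEAt (y : ℝ → ℝ) (x : ℝ) : Prop :=
  deriv^[2] y x ≠ 0 ∧ deriv^[4] y x = 4 / 3 * deriv^[3] y x ^ 2 / deriv^[2] y x

section Reciprocal

variable {u : ℝ → ℝ} {U : Set ℝ} {x : ℝ}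

theorem hasDerivAt_iterate_deriv_inv_one (hU : IsOpen U) (hu : ∀ x ∈ U, u x ≠ 0)
    (hd : ∀ j ≤ 1, ∀ x ∈ U, DifferentiableAt ℝ (deriv^[j] u) x) (hx : x ∈ U) :
    HasDerivAt (deriv^[1] fun x => (u x)⁻¹)
      ((2 * deriv u x ^ 2 - u x * deriv^[2] u x) / u x ^ 3) x := by
  have h1 : EqOn (deriv^[1] fun x => (u x)⁻¹) (fun x => -deriv u x / u x ^ 2) U :=
    eqOn_iterate_deriv_succ fun z hz => (hd 0 (by norm_num) z hz).hasDerivAt.inv (hu z hz)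
  have hu₀ : HasDerivAt u (deriv u x) x := (hd 0 (by norm_num) x hx).hasDerivAt
  have hu₁ : HasDerivAt (deriv u) (deriv^[2] u x) x := (hd 1 le_rfl x hx).hasDerivAt
  refine (hasDerivAt_iterate_deriv_of_eqOn
    (hu₁.neg.div (hu₀.pow 2) (pow_ne_zero 2 (hu x hx))) hU hx h1).congr_deriv ?_
  have hux := hu x hx
  simp only [Pi.pow_apply, Pi.neg_apply]
  field_simp
  ring

theorem hasDerivAt_iterate_deriv_inv_two (hU : IsOpen U) (hu : ∀ x ∈ U, u x ≠ 0)
    (hd : ∀ j ≤ 2, ∀ x ∈ U, DifferentiableAt ℝ (deriv^[j] u) x) (hx : x ∈ U) :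
    HasDerivAt (deriv^[2] fun x => (u x)⁻¹)
      ((6 * u x * deriv u x * deriv^[2] u x - u x ^ 2 * deriv^[3] u x - 6 * deriv u x ^ 3)
        / u x ^ 4) x := by
  have h2 := eqOn_iterate_deriv_succ fun z hz =>
    hasDerivAt_iterate_deriv_inv_one hU hu (fun j hj => hd j (by omega)) hz
  have hu₀ : HasDerivAt u (deriv u x) x := (hd 0 (by norm_num) x hx).hasDerivAt
  have hu₁ : HasDerivAt (deriv u) (deriv^[2] u x) x := (hd 1 (by norm_num) x hx).hasDerivAt
  have hu₂ : HasDerivAt (deriv^[2] u) (deriv^[3] u x) x := (hd 2 le_rfl x hx).hasDerivAt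
  refine (hasDerivAt_iterate_deriv_of_eqOn
    ((((hu₁.pow 2).const_mul 2).sub (hu₀.mul hu₂)).div (hu₀.pow 3) (pow_ne_zero 3 (hu x hx)))
    hU hx h2).congr_deriv ?_
  have hux := hu x hx
  simp only [Pi.pow_apply, Pi.mul_apply, Pi.sub_apply]
  field_simp
  ring

theorem hasDerivAt_iterate_deriv_inv_three (hU : IsOpen U) (hu : ∀ x ∈ U, u x ≠ 0)
    (hd : ∀ j ≤ 3, ∀ x ∈ U, DifferentiableAt ℝ (deriv^[j] u) x) (hx : x ∈ U) :
    HasDerivAt (deriv^[3] fun x => (u x)⁻¹)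
      ((24 * deriv u x ^ 4 - 36 * u x * deriv u x ^ 2 * deriv^[2] u x
          + 6 * u x ^ 2 * deriv^[2] u x ^ 2 + 8 * u x ^ 2 * deriv u x * deriv^[3] u x
          - u x ^ 3 * deriv^[4] u x) / u x ^ 5) x := by
  have h3 := eqOn_iterate_deriv_succ fun z hz =>
    hasDerivAt_iterate_deriv_inv_two hU hu (fun j hj => hd j (by omega)) hz
  have hu₀ : HasDerivAt u (deriv u x) x := (hd 0 (by norm_num) x hx).hasDerivAt
  have hu₁ : HasDerivAt (deriv u) (deriv^[2] u x) x := (hd 1 (by norm_num) x hx).hasDerivAt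
  have hu₂ : HasDerivAt (deriv^[2] u) (deriv^[3] u x) x := (hd 2 (by norm_num) x hx).hasDerivAt
  have hu₃ : HasDerivAt (deriv^[3] u) (deriv^[4] u x) x := (hd 3 le_rfl x hx).hasDerivAt
  refine (hasDerivAt_iterate_deriv_of_eqOn
    (((((hu₀.const_mul 6).mul hu₁).mul hu₂).sub ((hu₀.pow 2).mul hu₃)).sub
      ((hu₁.pow 3).const_mul 6) |>.div (hu₀.pow 4) (pow_ne_zero 4 (hu x hx)))
    hU hx h3).congr_deriv ?_
  have hux := hu x hx
  simp only [Pi.pow_apply, Pi.mul_apply, Pi.sub_apply]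
  field_simp
  ring

theorem differentiableAt_iterate_deriv_inv (hU : IsOpen U) (hu : ∀ x ∈ U, u x ≠ 0)
    (hd : ∀ j ≤ 3, ∀ x ∈ U, DifferentiableAt ℝ (deriv^[j] u) x) :
    ∀ j ≤ 3, ∀ x ∈ U, DifferentiableAt ℝ (deriv^[j] fun x => (u x)⁻¹) x := by
  intro j hj x hx
  interval_cases j
  · exact (hd 0 (by norm_num) x hx).inv (hu x hx)
  · exact (hasDerivAt_iterate_deriv_inv_one hU hu (fun j hj => hd j (by omega)) hx).differentiableAt
  · exact (hasDerivAt_iterate_deriv_inv_two hU hu (fun j hj => hd j (by omega)) hx).differentiableAt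
  · exact (hasDerivAt_iterate_deriv_inv_three hU hu hd hx).differentiableAt

theorem satisfiesCanonicalODEAt_inv (hU : IsOpen U) (hu : ∀ x ∈ U, u x ≠ 0)
    (hd : ∀ j ≤ 3, ∀ x ∈ U, DifferentiableAt ℝ (deriv^[j] u) x)
    (hx : x ∈ U) (hden : u x * deriv^[2] u x - 2 * deriv u x ^ 2 ≠ 0)
    (hode : deriv^[4] u x =
      (-24 * deriv u x * deriv^[2] u x * deriv^[3] u x
          + 18 * deriv^[2] u x ^ 3 + 4 * u x * deriv^[3] u x ^ 2)
        / (3 * (u x * deriv^[2] u x - 2 * deriv u x ^ 2))) :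
    SatisfiesCanonicalODEAt (fun x => (u x)⁻¹) x := by
  have hux := hu x hx
  have h2 := eqOn_iterate_deriv_succ (fun z hz =>
    hasDerivAt_iterate_deriv_inv_one hU hu (fun j hj => hd j (by omega)) hz) hx
  have h3 := eqOn_iterate_deriv_succ (fun z hz =>
    hasDerivAt_iterate_deriv_inv_two hU hu (fun j hj => hd j (by omega)) hz) hx
  have h4 := eqOn_iterate_deriv_succ (fun z hz => hasDerivAt_iterate_deriv_inv_three hU hu hd hz) hx
  have hnum : 2 * deriv u x ^ 2 - u x * deriv^[2] u x ≠ 0 := by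
    contrapose! hden
    linarith
  have hr2 := div_ne_zero hnum (pow_ne_zero 3 hux)
  refine ⟨h2 ▸ hr2, ?_⟩
  have hode' := (eq_div_iff (mul_ne_zero three_ne_zero hden)).mp hode
  rw [h2, h3, h4, eq_div_iff hr2]
  field_simp
  linear_combination u x ^ 3 * hode'

end Reciprocal

section Projective

variable {y : ℝ → ℝ} {U : Set ℝ} {s : ℝ}

theorem hasDerivAt_mul_comp_one_div (hs : s ≠ 0) (hd : DifferentiableAt ℝ y (1 / s)) :
    HasDerivAt (fun s => s * y (1 / s)) (y (1 / s) - 1 / s * deriv y (1 / s)) s := by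
  have hinv := hasDerivAt_one_div hs
  refine ((hasDerivAt_id s).mul (hd.hasDerivAt.comp s hinv)).congr_deriv ?_
  simp only [comp_apply, id]
  field_simp
  ring

theorem isOpen_compl_zero_inter_one_div_preimage (hU : IsOpen U) :
    IsOpen ({0}ᶜ ∩ (fun s => 1 / s) ⁻¹' U) :=
  (continuousOn_const.div continuousOn_id fun _ hs => hs).isOpen_inter_preimage
    isOpen_compl_singleton hU

theorem hasDerivAt_iterate_deriv_mul_comp_one_div_one (hU : IsOpen U)
    (hd : ∀ j ≤ 1, ∀ x ∈ U, DifferentiableAt ℝ (deriv^[j] y) x) (hs : s ≠ 0) (hsU : 1 / s ∈ U) :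
    HasDerivAt (deriv^[1] fun s => s * y (1 / s)) ((1 / s) ^ 3 * deriv^[2] y (1 / s)) s := by
  have h1 : EqOn (deriv^[1] fun s => s * y (1 / s)) (fun s => y (1 / s) - 1 / s * deriv y (1 / s))
      ({0}ᶜ ∩ (fun s => 1 / s) ⁻¹' U) :=
    eqOn_iterate_deriv_succ fun t ht => hasDerivAt_mul_comp_one_div ht.1 (hd 0 (by norm_num) _ ht.2)
  have hinv := hasDerivAt_one_div hs
  have hy₀ : HasDerivAt (fun s => y (1 / s)) (deriv y (1 / s) * -(s ^ 2)⁻¹) s :=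
    (hd 0 (by norm_num) _ hsU).hasDerivAt.comp s hinv
  have hy₁ : HasDerivAt (fun s => deriv y (1 / s)) (deriv^[2] y (1 / s) * -(s ^ 2)⁻¹) s :=
    (hd 1 le_rfl _ hsU).hasDerivAt.comp s hinv
  refine (hasDerivAt_iterate_deriv_of_eqOn (hy₀.sub (hinv.mul hy₁))
    (isOpen_compl_zero_inter_one_div_preimage hU) ⟨hs, hsU⟩ h1).congr_deriv ?_
  field_simp
  ring

theorem hasDerivAt_iterate_deriv_mul_comp_one_div_two (hU : IsOpen U)
    (hd : ∀ j ≤ 2, ∀ x ∈ U, DifferentiableAt ℝ (deriv^[j] y) x) (hs : s ≠ 0) (hsU : 1 / s ∈ U) :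
    HasDerivAt (deriv^[2] fun s => s * y (1 / s))
      (-((1 / s) ^ 4 * (3 * deriv^[2] y (1 / s) + 1 / s * deriv^[3] y (1 / s)))) s := by
  have h2 := eqOn_iterate_deriv_succ fun t (ht : t ∈ {0}ᶜ ∩ (fun s => 1 / s) ⁻¹' U) =>
    hasDerivAt_iterate_deriv_mul_comp_one_div_one hU (fun j hj => hd j (by omega)) ht.1 ht.2
  have hinv := hasDerivAt_one_div hs
  have hy₂ : HasDerivAt (fun s => deriv^[2] y (1 / s)) (deriv^[3] y (1 / s) * -(s ^ 2)⁻¹) s :=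
    (hd 2 le_rfl _ hsU).hasDerivAt.comp s hinv
  refine (hasDerivAt_iterate_deriv_of_eqOn ((hinv.pow 3).mul hy₂)
    (isOpen_compl_zero_inter_one_div_preimage hU) ⟨hs, hsU⟩ h2).congr_deriv ?_
  simp only [Pi.pow_apply, Nat.reduceSub, Nat.cast_ofNat]
  field_simp
  ring

theorem hasDerivAt_iterate_deriv_mul_comp_one_div_three (hU : IsOpen U)
    (hd : ∀ j ≤ 3, ∀ x ∈ U, DifferentiableAt ℝ (deriv^[j] y) x) (hs : s ≠ 0) (hsU : 1 / s ∈ U) :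
    HasDerivAt (deriv^[3] fun s => s * y (1 / s))
      ((1 / s) ^ 5 * (12 * deriv^[2] y (1 / s) + 8 * (1 / s) * deriv^[3] y (1 / s)
        + (1 / s) ^ 2 * deriv^[4] y (1 / s))) s := by
  have h3 := eqOn_iterate_deriv_succ fun t (ht : t ∈ {0}ᶜ ∩ (fun s => 1 / s) ⁻¹' U) =>
    hasDerivAt_iterate_deriv_mul_comp_one_div_two hU (fun j hj => hd j (by omega)) ht.1 ht.2
  have hinv := hasDerivAt_one_div hs
  have hy₂ : HasDerivAt (fun s => deriv^[2] y (1 / s)) (deriv^[3] y (1 / s) * -(s ^ 2)⁻¹) s :=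
    (hd 2 (by norm_num) _ hsU).hasDerivAt.comp s hinv
  have hy₃ : HasDerivAt (fun s => deriv^[3] y (1 / s)) (deriv^[4] y (1 / s) * -(s ^ 2)⁻¹) s :=
    (hd 3 le_rfl _ hsU).hasDerivAt.comp s hinv
  refine (hasDerivAt_iterate_deriv_of_eqOn
    ((hinv.pow 4).mul ((hy₂.const_mul 3).add (hinv.mul hy₃))).neg
    (isOpen_compl_zero_inter_one_div_preimage hU) ⟨hs, hsU⟩ h3).congr_deriv ?_
  simp only [Pi.pow_apply, Pi.mul_apply, Pi.add_apply, Nat.reduceSub, Nat.cast_ofNat]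
  field_simp
  ring

theorem SatisfiesCanonicalODEAt.mul_comp_one_div (hU : IsOpen U)
    (hd : ∀ j ≤ 3, ∀ x ∈ U, DifferentiableAt ℝ (deriv^[j] y) x) (hs : s ≠ 0) (hsU : 1 / s ∈ U)
    (hy : SatisfiesCanonicalODEAt y (1 / s)) : SatisfiesCanonicalODEAt (fun s => s * y (1 / s)) s := by
  obtain ⟨hy₂, hy₄⟩ := hy
  have h2 := eqOn_iterate_deriv_succ (fun t (ht : t ∈ {0}ᶜ ∩ (fun s => 1 / s) ⁻¹' U) =>
    hasDerivAt_iterate_deriv_mul_comp_one_div_one hU (fun j hj => hd j (by omega)) ht.1 ht.2)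
    ⟨hs, hsU⟩
  have h3 := eqOn_iterate_deriv_succ (fun t (ht : t ∈ {0}ᶜ ∩ (fun s => 1 / s) ⁻¹' U) =>
    hasDerivAt_iterate_deriv_mul_comp_one_div_two hU (fun j hj => hd j (by omega)) ht.1 ht.2)
    ⟨hs, hsU⟩
  have h4 := eqOn_iterate_deriv_succ (fun t (ht : t ∈ {0}ᶜ ∩ (fun s => 1 / s) ⁻¹' U) =>
    hasDerivAt_iterate_deriv_mul_comp_one_div_three hU hd ht.1 ht.2) ⟨hs, hsU⟩
  have hv₂ : (1 / s) ^ 3 * deriv^[2] y (1 / s) ≠ 0 := mul_ne_zero (by positivity) hy₂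
  refine ⟨h2 ▸ hv₂, ?_⟩
  rw [h2, h3, h4, hy₄]
  field_simp
  ring

end Projective

theorem stmt_11 (u : ℝ → ℝ) (J : Set ℝ)
    (hJ : ∃ a b : ℝ, J = Set.Ioo a b)
    (hd1 : ∀ x ∈ J, DifferentiableAt ℝ u x)
    (hd2 : ∀ x ∈ J, DifferentiableAt ℝ (deriv u) x)
    (hd3 : ∀ x ∈ J, DifferentiableAt ℝ (deriv^[2] u) x)
    (hd4 : ∀ x ∈ J, DifferentiableAt ℝ (deriv^[3] u) x)
    (hu0 : ∀ x ∈ J, u x ≠ 0)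
    (hden : ∀ x ∈ J, u x * deriv^[2] u x - 2 * (deriv u x) ^ 2 ≠ 0)
    (hode : ∀ x ∈ J, deriv^[4] u x =
      (-24 * deriv u x * deriv^[2] u x * deriv^[3] u x
          + 18 * (deriv^[2] u x) ^ 3 + 4 * u x * (deriv^[3] u x) ^ 2)
        / (3 * (u x * deriv^[2] u x - 2 * (deriv u x) ^ 2)))
    (v : ℝ → ℝ) (hv : ∀ t, v t = t / u (1 / t)) :
    ∀ t : ℝ, 0 < t → 1 / t ∈ J →
      deriv^[2] v t ≠ 0 ∧
        deriv^[4] v t = (4 / 3) * (deriv^[3] v t) ^ 2 / deriv^[2] v t := by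
  intro t ht htJ
  have hJ_open : IsOpen J := by
    obtain ⟨a, b, rfl⟩ := hJ
    exact isOpen_Ioo
  have hd : ∀ j ≤ 3, ∀ x ∈ J, DifferentiableAt ℝ (deriv^[j] u) x := by
    intro j hj
    interval_cases j <;> assumption
  obtain rfl : v = fun t => t / u (1 / t) := funext hv
  exact (satisfiesCanonicalODEAt_inv hJ_open hu0 hd htJ (hden _ htJ) (hode _ htJ)).mul_comp_one_div
    hJ_open (differentiableAt_iterate_deriv_inv hJ_open hu0 hd) ht.ne' htJ
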